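/- arXiv:2605.11324 — 3 statements merged into one kernel-verified Lean document; each statement's English description precedes it below -/
import Mathlib

section
/- Let $\mu : [K] \times [L] \to \mathbb{R}$ satisfy the WLOG ordering ($\mu_{i,1} \le \mu_{i,j}$ for all $j$, and $\mu_{1,1} \ge \mu_{2,1} \ge \cdots \ge \mu_{K,1}$), with gaps defined as $\Delta_{1,j} = \mu_{1,j} - \mu_{2,1}$ and $\Delta_{i,j} = \max(\mu_{1,1} - \mu_{i,1}, \mu_{i,j} - \mu_{i,1})$ for $i \ne 1$. Let $\mathcal{A} \subseteq [K] \times [L]$ be an active set such that (a) $(1, 1') \in \mathcal{A}$ for some leaf $1'$ of subtree 1 whose mean equals $\min_{j : (1,j) \in \mathcal{A}} \mu_{1,j} \ge \mu_{1,1}$, and (b) for every $i \ne 1$ with $\mathcal{A} \cap (\{i\} \times [L]) \ne \emptyset$, we have $(i, 1) \in \mathcal{A}$. Define the restricted min-values $v_i^{\mathcal{A}} = \min_{j : (i,j) \in \mathcal{A}} \mu_{i,j}$ and suppose subtree 1 is the best active subtree under the restriction. Define the restricted gap of an active leaf $(i,j)$ with $i \ne 1$ as $\Delta_{i,j}^{\mathcal{A}}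 = \max(v_1^{\mathcal{A}} - v_i^{\mathcal{A}},\ \mu_{i,j} - v_i^{\mathcal{A}})$. Then for every active leaf $(i,j)$ with $i \ne 1$, $\Delta_{i,j}^{\mathcal{A}} \ge \Delta_{i,j}$. -/
open Finset

/-- gap monotonicity under the soundness invariant. If the active
set `A` keeps an empirical-min leaf of subtree 1 active with restricted
min-value `v 1 ≥ μ 1 1`, keeps the true minimizer `(i,1)` of every active
suboptimal subtree, and subtree 1 is the best active subtree, then the
restricted gap of every active leaf of a suboptimal subtree dominates its
original gap. Here `v i` is the restricted min-value `min_{j : (i,j) ∈ A} μ i j`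
(characterized via `IsLeast`). -/
theorem stmt11 (K L : ℕ) (hK : 2 ≤ K) (hL : 1 ≤ L) (μ : ℕ → ℕ → ℝ)
    (hleaf : ∀ i ∈ Icc 1 K, ∀ j ∈ Icc 1 L, μ i 1 ≤ μ i j)
    (hchain : ∀ i ∈ Icc 1 K, ∀ i' ∈ Icc 1 K, i ≤ i' → μ i' 1 ≤ μ i 1)
    (A : Set (ℕ × ℕ)) (hA : A ⊆ Set.Icc 1 K ×ˢ Set.Icc 1 L)
    (v : ℕ → ℝ)
    (hv : ∀ i, (∃ j, (i, j) ∈ A) →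
      IsLeast {x | ∃ j, (i, j) ∈ A ∧ μ i j = x} (v i))
    (h1active : ∃ j, (1, j) ∈ A)
    (hv1 : μ 1 1 ≤ v 1)
    (hmin : ∀ i, i ≠ 1 → (∃ j, (i, j) ∈ A) → (i, 1) ∈ A)
    (hbest : ∀ i, (∃ j, (i, j) ∈ A) → v i ≤ v 1) :
    ∀ i j, (i, j) ∈ A → i ≠ 1 →
      max (μ 1 1 - μ i 1) (μ i j - μ i 1) ≤ max (v 1 - v i) (μ i j - v i) := by
  intro i j hij hi1
  have hex : ∃ j, (i, j) ∈ A := ⟨j, hij⟩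
  have hi1A : (i, 1) ∈ A := hmin i hi1 hex
  have hvi := hv i hex
  have hiK : i ∈ Icc 1 K := by
    have := hA hij; simp [Set.mem_prod, Set.mem_Icc, Prod.le_def] at this; simp [this.1.1, this.2.1]
  -- v i = μ i 1
  have hle : v i ≤ μ i 1 := hvi.2 ⟨1, hi1A, rfl⟩
  have hge : μ i 1 ≤ v i := by
    obtain ⟨j', hj', hj'eq⟩ := hvi.1
    have := hA hj'
    simp [Set.mem_prod, Set.mem_Icc, Prod.le_def] at this
    rw [← hj'eq]
    exact hleaf i hiK j' (by simp [this.1.2, this.2.2])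
  have hveq : v i = μ i 1 := le_antisymm hle hge
  rw [hveq]
  exact max_le_max (by linarith) (le_refl _)
end

section
/- Let $P$ and $Q$ be probability measures on a measurable space and $E$ a measurable event. Then $P(E^c) + Q(E) \ge \tfrac{1}{2} \exp(-\mathrm{KL}(P, Q))$. -/
open MeasureTheory
open scoped Classical

/-- Kullback–Leibler divergence `KL(P, Q) = ∫ log (dP/dQ) dP`, valued in `ℝ≥0∞`,
equal to `+∞` when `P` is not absolutely continuous w.r.t. `Q` (or the
log-likelihood ratio is not integrable). -/
noncomputable def klDiv' {α : Type*} [MeasurableSpace α] (P Q : Measure α) : ENNReal :=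
  if P ≪ Q ∧ Integrable (llr P Q) P then ENNReal.ofReal (∫ x, llr P Q x ∂P) else ⊤

/-- `exp(-x)` for `x : ℝ≥0∞`, with `exp(-∞) = 0`. -/
noncomputable def expNeg (x : ENNReal) : ENNReal :=
  if x = ⊤ then 0 else ENNReal.ofReal (Real.exp (-x.toReal))

/-!
Write `p = dP/dQ` and `B = ∫ √p dQ` (the Bhattacharyya coefficient). Jensen's inequality for
`exp` under `P` gives `exp (-KL/2) ≤ ∫ p^{-1/2} dP = B`. Since `√p = √(min p 1 · max p 1)`,
Cauchy–Schwarz gives `B² ≤ (∫ min p 1 dQ) (∫ max p 1 dQ)`; the first factor is at most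
`P(Eᶜ) + Q(E)` (bound `min p 1` by `p` on `Eᶜ` and by `1` on `E`), the second at most
`∫ (p + 1) dQ ≤ 2`.
-/

open Real
open scoped ENNReal

namespace ENNReal

theorem lintegral_rpow_half_mul_sq_le {α : Type*} [MeasurableSpace α] {μ : Measure α}
    {f g : α → ℝ≥0∞} (hf : AEMeasurable f μ) (hg : AEMeasurable g μ) :
    (∫⁻ x, (f x * g x) ^ (1 / 2 : ℝ) ∂μ) ^ 2 ≤ (∫⁻ x, f x ∂μ) * ∫⁻ x, g x ∂μ := by
  have sq_rpow_half : ∀ y : ℝ≥0∞, (y ^ (1 / 2 : ℝ)) ^ (2 : ℝ) = y := fun y => by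
    rw [← rpow_mul]; norm_num
  have holder := lintegral_mul_le_Lp_mul_Lq μ Real.HolderConjugate.two_two
    (hf.pow_const (1 / 2 : ℝ)) (hg.pow_const (1 / 2 : ℝ))
  simp only [Pi.mul_apply, sq_rpow_half] at holder
  simp_rw [mul_rpow_of_nonneg _ _ (by norm_num : (0 : ℝ) ≤ 1 / 2)]
  calc _ ≤ ((∫⁻ x, f x ∂μ) ^ (1 / 2 : ℝ) * (∫⁻ x, g x ∂μ) ^ (1 / 2 : ℝ)) ^ 2 := by gcongr
    _ = _ := by
      rw [← mul_rpow_of_nonneg _ _ (by norm_num), ← rpow_natCast, ← rpow_mul]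
      norm_num

end ENNReal

namespace MeasureTheory.Measure

variable {α : Type*} [MeasurableSpace α] {P Q : Measure α}

noncomputable def bhattacharyya (P Q : Measure α) : ℝ≥0∞ :=
  ∫⁻ x, P.rnDeriv Q x ^ (1 / 2 : ℝ) ∂Q

theorem lintegral_min_rnDeriv_one_le {E : Set α} (hE : MeasurableSet E) :
    ∫⁻ x, min (P.rnDeriv Q x) 1 ∂Q ≤ P Eᶜ + Q E := by
  rw [← lintegral_add_compl _ hE, add_comm]
  gcongr
  · calc ∫⁻ x in Eᶜ, min (P.rnDeriv Q x) 1 ∂Q ≤ ∫⁻ x in Eᶜ, P.rnDeriv Q x ∂Q :=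
          lintegral_mono fun _ => min_le_left _ _
      _ ≤ P Eᶜ := setLIntegral_rnDeriv_le _
  · calc ∫⁻ x in E, min (P.rnDeriv Q x) 1 ∂Q ≤ ∫⁻ _ in E, 1 ∂Q :=
          lintegral_mono fun _ => min_le_right _ _
      _ = Q E := by simp

theorem lintegral_max_rnDeriv_one_le :
    ∫⁻ x, max (P.rnDeriv Q x) 1 ∂Q ≤ P Set.univ + Q Set.univ :=
  calc ∫⁻ x, max (P.rnDeriv Q x) 1 ∂Q ≤ ∫⁻ x, (P.rnDeriv Q x + 1) ∂Q :=
        lintegral_mono fun _ => max_le le_self_add le_add_self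
    _ = ∫⁻ x, P.rnDeriv Q x ∂Q + Q Set.univ := by
        rw [lintegral_add_right _ measurable_const, lintegral_one]
    _ ≤ P Set.univ + Q Set.univ := by gcongr; exact lintegral_rnDeriv_le

theorem bhattacharyya_sq_le {E : Set α} (hE : MeasurableSet E) :
    bhattacharyya P Q ^ 2 ≤ (P Eᶜ + Q E) * (P Set.univ + Q Set.univ) := by
  have hp := (measurable_rnDeriv P Q).aemeasurable (μ := Q)
  calc bhattacharyya P Q ^ 2
      = (∫⁻ x, (min (P.rnDeriv Q x) 1 * max (P.rnDeriv Q x) 1) ^ (1 / 2 : ℝ) ∂Q) ^ 2 := by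
        simp only [min_mul_max, mul_one, bhattacharyya]
    _ ≤ (∫⁻ x, min (P.rnDeriv Q x) 1 ∂Q) * ∫⁻ x, max (P.rnDeriv Q x) 1 ∂Q :=
        ENNReal.lintegral_rpow_half_mul_sq_le (hp.min aemeasurable_const)
          (hp.max aemeasurable_const)
    _ ≤ (P Eᶜ + Q E) * (P Set.univ + Q Set.univ) :=
        mul_le_mul' (lintegral_min_rnDeriv_one_le hE) lintegral_max_rnDeriv_one_le

theorem bhattacharyya_ne_top [IsFiniteMeasure P] [IsFiniteMeasure Q] :
    bhattacharyya P Q ≠ ⊤ := by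
  have h := bhattacharyya_sq_le (P := P) (Q := Q) MeasurableSet.empty
  have : (P ∅ᶜ + Q ∅) * (P Set.univ + Q Set.univ) ≠ ⊤ := by simp [ENNReal.mul_eq_top]
  simpa using ne_top_of_le_ne_top this h

theorem lintegral_exp_neg_half_llr [SigmaFinite P] [P.HaveLebesgueDecomposition Q]
    (hPQ : P ≪ Q) :
    ∫⁻ x, ENNReal.ofReal (exp (-llr P Q x / 2)) ∂P = bhattacharyya P Q := by
  have h_ae : ∀ᵐ x ∂P,
      ENNReal.ofReal (exp (-llr P Q x / 2)) = P.rnDeriv Q x ^ (-(1 / 2) : ℝ) := by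
    filter_upwards [rnDeriv_pos hPQ, hPQ.ae_le (rnDeriv_lt_top P Q)] with x hpos hlt
    have hpos' := ENNReal.toReal_pos hpos.ne' hlt.ne
    rw [← ENNReal.ofReal_toReal hlt.ne, ENNReal.ofReal_rpow_of_pos hpos',
      Real.rpow_def_of_pos hpos', llr]
    ring_nf
  rw [lintegral_congr_ae h_ae,
    ← lintegral_rnDeriv_mul hPQ ((measurable_rnDeriv P Q).pow_const _).aemeasurable]
  refine lintegral_congr_ae ?_
  filter_upwards [rnDeriv_lt_top P Q] with x hlt
  -- `p * p ^ (-1/2) = p ^ (1/2)` holds also at `p = 0`, because `1 + (-1/2) > 0`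
  have h := ENNReal.rpow_add_of_add_pos hlt.ne 1 (-(1 / 2)) (by norm_num)
  rw [ENNReal.rpow_one] at h
  rw [← h]
  norm_num

theorem ofReal_exp_neg_half_integral_llr_le [IsProbabilityMeasure P] [IsFiniteMeasure Q]
    (hPQ : P ≪ Q) (hint : Integrable (llr P Q) P) :
    ENNReal.ofReal (exp (-(∫ x, llr P Q x ∂P) / 2)) ≤ bhattacharyya P Q := by
  have hnonneg : 0 ≤ᵐ[P] fun x => exp (-llr P Q x / 2) := ae_of_all _ fun _ => (exp_pos _).le
  have hlint := lintegral_exp_neg_half_llr hPQ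
  have hexp_int : Integrable (fun x => exp (-llr P Q x / 2)) P := by
    refine ⟨((measurable_llr P Q).neg.div_const 2).exp.aestronglyMeasurable, ?_⟩
    rw [hasFiniteIntegral_iff_ofReal hnonneg, hlint]
    exact bhattacharyya_ne_top.lt_top
  have jensen := convexOn_exp.map_integral_le (f := fun x => -llr P Q x / 2) continuousOn_exp
    isClosed_univ (ae_of_all _ fun _ => Set.mem_univ _) (hint.neg.div_const 2) hexp_int
  rw [integral_div, integral_neg] at jensen
  rw [← hlint, ← ofReal_integral_eq_lintegral_ofReal hexp_int hnonneg]
  exact ENNReal.ofReal_le_ofReal jensen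

theorem ofReal_exp_neg_integral_llr_le [IsProbabilityMeasure P] [IsProbabilityMeasure Q]
    (hPQ : P ≪ Q) (hint : Integrable (llr P Q) P) {E : Set α} (hE : MeasurableSet E) :
    ENNReal.ofReal (exp (-∫ x, llr P Q x ∂P)) ≤ 2 * (P Eᶜ + Q E) :=
  calc ENNReal.ofReal (exp (-∫ x, llr P Q x ∂P))
      = ENNReal.ofReal (exp (-(∫ x, llr P Q x ∂P) / 2)) ^ 2 := by
        rw [← ENNReal.ofReal_pow (exp_pos _).le, ← exp_nat_mul]
        ring_nf
    _ ≤ bhattacharyya P Q ^ 2 := by gcongr; exact ofReal_exp_neg_half_integral_llr_le hPQ hint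
    _ ≤ (P Eᶜ + Q E) * (P Set.univ + Q Set.univ) := bhattacharyya_sq_le hE
    _ = 2 * (P Eᶜ + Q E) := by simp [one_add_one_eq_two, mul_comm]

end MeasureTheory.Measure

theorem expNeg_ofReal_le (K : ℝ) : expNeg (ENNReal.ofReal K) ≤ ENNReal.ofReal (exp (-K)) := by
  rw [expNeg, if_neg ENNReal.ofReal_ne_top, ENNReal.toReal_ofReal']
  gcongr
  exact le_max_left _ _

/-- the Bretagnolle–Huber inequality
`P(Eᶜ) + Q(E) ≥ (1/2) exp(-KL(P,Q))`. -/
theorem stmt14 {α : Type*} [MeasurableSpace α] (P Q : Measure α)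
    [IsProbabilityMeasure P] [IsProbabilityMeasure Q]
    (E : Set α) (hE : MeasurableSet E) :
    2⁻¹ * expNeg (klDiv' P Q) ≤ P Eᶜ + Q E := by
  by_cases h : P ≪ Q ∧ Integrable (llr P Q) P
  · rw [klDiv', if_pos h]
    calc 2⁻¹ * expNeg (ENNReal.ofReal (∫ x, llr P Q x ∂P))
        ≤ 2⁻¹ * ENNReal.ofReal (exp (-∫ x, llr P Q x ∂P)) := by gcongr; exact expNeg_ofReal_le _
      _ ≤ 2⁻¹ * (2 * (P Eᶜ + Q E)) := by
        gcongr; exact Measure.ofReal_exp_neg_integral_llr_le h.1 h.2 hE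
      _ = P Eᶜ + Q E := ENNReal.inv_mul_cancel_left two_ne_zero ENNReal.ofNat_ne_top
  · simp [klDiv', h, expNeg]
end

section
/- Let $K \ge 2$, $d_2, \ldots, d_K > 0$, $H = \sum_{i=2}^K d_i^{-2}$, and $T > 0$. Consider any assignment of error probabilities $p_1, p_2, \ldots, p_K \in [0,1]$ and expected pull counts $N_2, \ldots, N_K \ge 0$ with $\sum_{i=2}^K N_i \le T$, such that for every $i \in \{2, \ldots, K\}$ the Bretagnolle–Huber constraint $p_1 + p_i \ge \tfrac12 \exp(-2 N_i d_i^2)$ holds. Then $\max_{i \in [K]} p_i \ge \tfrac14 \exp(-2T/H)$. -/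
open Finset

/-- abstract fixed-budget Gaussian BAI lower bound: if the error
probabilities `p i` satisfy the Bretagnolle–Huber constraints
`p 1 + p i ≥ (1/2) exp(-2 N i d i²)` and the expected pull counts respect the
budget `T`, then some `p i` is at least `(1/4) exp(-2T/H)`. -/
theorem stmt18 (K : ℕ) (hK : 2 ≤ K) (d : ℕ → ℝ)
    (hd : ∀ i ∈ Icc 2 K, 0 < d i)
    (T : ℝ) (hT : 0 < T)
    (p : ℕ → ℝ) (hp : ∀ i ∈ Icc 1 K, p i ∈ Set.Icc (0 : ℝ) 1)
    (Npull : ℕ → ℝ) (hNn : ∀ i ∈ Icc 2 K, 0 ≤ Npull i)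
    (hbudget : ∑ i ∈ Icc 2 K, Npull i ≤ T)
    (hBH : ∀ i ∈ Icc 2 K,
      (1 / 2) * Real.exp (-(2 * Npull i * d i ^ 2)) ≤ p 1 + p i) :
    ∃ i ∈ Icc 1 K,
      (1 / 4) * Real.exp (-(2 * T / (∑ i ∈ Icc 2 K, (d i ^ 2)⁻¹))) ≤ p i := by
  set H : ℝ := ∑ i ∈ Icc 2 K, (d i ^ 2)⁻¹ with hH
  have hne : (Icc 2 K).Nonempty := ⟨2, by simp [hK]⟩
  have hHpos : 0 < H :=
    Finset.sum_pos (fun i hi => by have := hd i hi; positivity) hne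
  -- pigeonhole
  have hpig : ∃ i ∈ Icc 2 K, Npull i * d i ^ 2 ≤ T / H := by
    by_contra h
    push_neg at h
    have hlt : T < ∑ i ∈ Icc 2 K, Npull i := by
      calc T = ∑ i ∈ Icc 2 K, T / H * (d i ^ 2)⁻¹ := by
              rw [← Finset.mul_sum, ← hH]; field_simp
        _ < ∑ i ∈ Icc 2 K, Npull i := by
            apply Finset.sum_lt_sum_of_nonempty hne
            intro i hi
            have hdi := hd i hi
            have := h i hi
            rw [← div_eq_mul_inv, div_lt_iff₀ (show (0:ℝ) < d i ^ 2 by positivity)]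
            exact this
    linarith
  obtain ⟨i, hi, hile⟩ := hpig
  have hdi := hd i hi
  have hbh := hBH i hi
  have hexp : Real.exp (-(2 * T / H)) ≤ Real.exp (-(2 * Npull i * d i ^ 2)) := by
    apply Real.exp_le_exp.2
    have : 2 * Npull i * d i ^ 2 ≤ 2 * T / H := by
      have : Npull i * d i ^ 2 ≤ T / H := hile
      calc 2 * Npull i * d i ^ 2 = 2 * (Npull i * d i ^ 2) := by ring
        _ ≤ 2 * (T / H) := by linarith
        _ = 2 * T / H := by ring
    linarith
  have key : (1 / 2) * Real.exp (-(2 * T / H)) ≤ p 1 + p i := by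
    calc (1 / 2) * Real.exp (-(2 * T / H))
        ≤ (1 / 2) * Real.exp (-(2 * Npull i * d i ^ 2)) := by linarith
      _ ≤ p 1 + p i := hbh
  simp only [mem_Icc] at hi
  rcases le_total (p 1) (p i) with hle | hle
  · exact ⟨i, by simp [mem_Icc]; omega, by linarith⟩
  · exact ⟨1, by simp [mem_Icc]; omega, by linarith⟩
end
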